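/- Let (T, M) be a local domain with residue field k and residue map π : T → k, and let D be an integral domain with fraction field k, viewed as a subring of k. Let A := D ×_k T = π⁻¹(D). If P is a prime ideal of A with M ⊆ P, and 𝔭 is the unique prime ideal of D with π⁻¹(𝔭) = P, then the localization A_P (inside the fraction field of T) equals the pullback D_𝔭 ×_k T = π⁻¹(D_𝔭), where D_𝔭 is the localization of D at 𝔭 viewed as a subring of k. -/

import Mathlib

/-!
Since `ker π` is the maximal ideal of the local ring `T`, an element `y` of `T` is a unit as soon
as `π y ≠ 0`, and then `π (y⁻¹) = (π y)⁻¹`. Hence an element of `π⁻¹(D)` whose image lies outside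
`𝔭` is invertible in `π⁻¹(D_𝔭)`. Conversely a fraction `x / s` of `D_𝔭` is reached from
`π⁻¹(D)` by lifting the denominator `s` to `t ∈ T`: for `z ∈ π⁻¹(D_𝔭)` with `π z = x / s` we
get `z = (z t) / t` with `z t ∈ π⁻¹(D)` and `t ∉ P`.
-/

open IsLocalRing

section

variable {T k : Type*} [CommRing T] [IsLocalRing T] [Field k] {π : T →+* k}

theorem isUnit_of_isUnit_restrict (hker : RingHom.ker π = maximalIdeal T) {E : Subring k}
    {y : E.comap π} (hy : IsUnit (π.restrict (E.comap π) E (fun _ hx => hx) y)) : IsUnit y := by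
  obtain ⟨hne, hinv⟩ := Submonoid.isUnit_iff_and.mp hy
  obtain ⟨u, hu⟩ : IsUnit (y : T) := by
    rw [← notMem_maximalIdeal, ← hker]
    exact hne
  have hu_inv : π ↑u⁻¹ ∈ E := by
    rw [map_units_inv, hu]
    exact hinv
  exact IsUnit.of_mul_eq_one ⟨_, hu_inv⟩ (Subtype.ext (by simp [← hu]))

theorem isLocalization_comap_of_isLocalization (hπ : Function.Surjective π)
    (hker : RingHom.ker π = maximalIdeal T) {D E : Subring k} (hDE : D ≤ E) (S : Submonoid D)
    (hE : @IsLocalization D _ S E _ (Subring.inclusion hDE).toAlgebra) :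
    @IsLocalization (D.comap π) _ (S.comap (π.restrict (D.comap π) D fun _ hx => hx))
      (E.comap π) _
      (Subring.inclusion (fun _ hx => hDE hx : D.comap π ≤ E.comap π)).toAlgebra := by
  let : Algebra D E := (Subring.inclusion hDE).toAlgebra
  let : Algebra (D.comap π) (E.comap π) :=
    (Subring.inclusion (fun _ hx => hDE hx : D.comap π ≤ E.comap π)).toAlgebra
  refine ⟨?_, ?_, ?_⟩
  · rintro ⟨y, hy⟩
    exact isUnit_of_isUnit_restrict hker (hE.toIsLocalizationMap.map_units ⟨_, hy⟩)
  · rintro ⟨z, hz⟩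
    obtain ⟨⟨x, s⟩, hxs⟩ := hE.toIsLocalizationMap.surj ⟨π z, hz⟩
    obtain ⟨t, ht⟩ := hπ s
    have htD : π t ∈ D := ht ▸ s.1.2
    have hk : π z * s = x := congrArg Subtype.val hxs
    have hnum : π (z * t) ∈ D := by
      rw [map_mul, ht, hk]
      exact x.2
    have htS : (⟨π t, htD⟩ : D) ∈ S := (Subtype.ext ht : (⟨π t, htD⟩ : D) = s) ▸ s.2
    exact ⟨⟨⟨z * t, hnum⟩, ⟨⟨t, htD⟩, htS⟩⟩, rfl⟩
  · intro x y h
    obtain rfl := Subring.inclusion_injective _ h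
    exact ⟨1, rfl⟩

end

theorem stmt_5 {T k : Type*} [CommRing T] [IsLocalRing T] [Field k]
    (π : T →+* k) (hπ : Function.Surjective π)
    (hker : RingHom.ker π = IsLocalRing.maximalIdeal T)
    (D : Subring k)
    (P : Ideal (D.comap π)) [P.IsPrime]
    (𝔭 : Ideal D) [𝔭.IsPrime]
    (h𝔭 : 𝔭.comap (π.restrict (D.comap π) D (fun _ hx => hx)) = P)
    (E : Subring k) (hDE : D ≤ E)
    (hE : @IsLocalization D _ 𝔭.primeCompl E _ (Subring.inclusion hDE).toAlgebra) :
    @IsLocalization (D.comap π) _ P.primeCompl (E.comap π) _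
      (Subring.inclusion (fun _ hx => hDE hx : D.comap π ≤ E.comap π)).toAlgebra := by
  subst h𝔭
  -- `(𝔭.comap ρ).primeCompl` and `𝔭.primeCompl.comap ρ` agree definitionally.
  exact isLocalization_comap_of_isLocalization hπ hker hDE 𝔭.primeCompl hE
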